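/- arXiv:1410.2231 — 2 statements merged into one kernel-verified Lean document; each statement's English description precedes it below -/
import Mathlib

section
/- Let c be a proper 3-coloring of the m×n grid graph and F a set of edges. Then F is a forcing set for c if and only if F crosses every uniform cut for c, i.e., for every nonempty S ⊆ V with v₀ ∉ S such that c(u) − c(v) is constant over all edges {u,v} with u ∈ S, v ∉ S, some edge of F has exactly one endpoint in S. -/
/-- Two vertices of the `m × n` grid graph are adjacent:
`(i,j)` is adjacent to `(i',j')` iff `|i-i'| + |j-j'| = 1`. -/
def GridAdj {m n : ℕ} (u v : Fin m × Fin n) : Prop :=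
  |(u.1.val : ℤ) - (v.1.val : ℤ)| + |(u.2.val : ℤ) - (v.2.val : ℤ)| = 1

/-- A proper `3`-coloring of the `m × n` grid graph. -/
def IsProperColoring {m n : ℕ} (c : Fin m × Fin n → ZMod 3) : Prop :=
  ∀ u v, GridAdj u v → c u ≠ c v

/-- The set of (unordered) edges of the `m × n` grid graph. -/
def GridEdges (m n : ℕ) : Set (Sym2 (Fin m × Fin n)) :=
  {e | ∃ u v, GridAdj u v ∧ e = s(u, v)}

/-- `F` is a forcing set for the proper `3`-coloring `c`: the only proper
`3`-coloring agreeing with `c` at the base vertex `v₀ = (0,0)` and having the same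
color differences as `c` across every edge of `F` is `c` itself. -/
def IsForcing {m n : ℕ} [NeZero m] [NeZero n] (c : Fin m × Fin n → ZMod 3)
    (F : Set (Sym2 (Fin m × Fin n))) : Prop :=
  ∀ c' : Fin m × Fin n → ZMod 3, IsProperColoring c' →
    c' (0, 0) = c (0, 0) →
    (∀ u v : Fin m × Fin n, GridAdj u v → s(u, v) ∈ F → c' v - c' u = c v - c u) →
    c' = c

/-- The checkerboard `3`-coloring of the grid, corresponding to the standard
Miura-ori mountain-valley assignment. -/
def checkerboard {m n : ℕ} : Fin m × Fin n → ZMod 3 :=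
  fun v => if (v.1.val + v.2.val) % 2 = 0 then 0 else 1

/-!
A proper `3`-coloring `c` of the grid lifts to an integer height function `h` with
`h v - h u = ±1 ≡ c v - c u` along every edge: around a unit square four steps `±1` whose
sum is `0` mod `3` sum to `0`, so the lift is path independent.

If a uniform cut `S` with boundary difference `d` is not crossed by `F`, adding a constant
`e ≠ 0` with `d + e ≠ 0` to `c` on `S` gives a second proper coloring with the same base
color and the same differences along `F`. Conversely, if a proper `c' ≠ c` has these
properties, `g = h' - h` vanishes at `v₀`, is nonzero somewhere (it is `c' - c` mod `3`),
changes by `0` or `±2` along edges and is constant along `F`. The level set of its maximum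
(or of the maximum of `-g`) is then a uniform cut that `F` does not cross.
-/

open Finset

lemma valMinAbs_eq_one_or_eq_neg_one {x : ZMod 3} (hx : x ≠ 0) :
    x.valMinAbs = 1 ∨ x.valMinAbs = -1 := by
  revert x; decide

lemma valMinAbs_sub_add_valMinAbs_sub_comm {p q r s : ZMod 3} (hpq : p ≠ q) (hqs : q ≠ s)
    (hpr : p ≠ r) (hrs : r ≠ s) :
    (q - p).valMinAbs + (s - q).valMinAbs = (r - p).valMinAbs + (s - r).valMinAbs := by
  revert p q r s; decide

section GridPotential

variable {G : Type*} [AddCommGroup G] (x y : ℕ → ℕ → G)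

/-- The potential of the increments `x i j` along `(i, j) → (i, j + 1)` and `y i j` along
`(i, j) → (i + 1, j)`, integrated down column `0` and then along row `i`. -/
def gridPotential (i j : ℕ) : G :=
  ∑ a ∈ range i, y a 0 + ∑ b ∈ range j, x i b

lemma gridPotential_zero_zero : gridPotential x y 0 0 = 0 := by
  simp [gridPotential]

lemma gridPotential_succ_right (i j : ℕ) :
    gridPotential x y i (j + 1) = gridPotential x y i j + x i j := by
  simp [gridPotential, sum_range_succ, add_assoc]

lemma gridPotential_succ_left {i j : ℕ}
    (hface : ∀ b < j, y i b + x (i + 1) b = x i b + y i (b + 1)) :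
    gridPotential x y (i + 1) j = gridPotential x y i j + y i j := by
  induction j with
  | zero => simp [gridPotential, sum_range_succ]
  | succ j ih =>
    rw [gridPotential_succ_right, gridPotential_succ_right, ih fun b hb => hface b (by omega),
      add_assoc, hface j (by omega), add_assoc]

end GridPotential

section Height

variable {m n : ℕ}

lemma gridAdj_iff (u v : Fin m × Fin n) :
    GridAdj u v ↔
      (u.1.val = v.1.val ∧ (u.2.val + 1 = v.2.val ∨ v.2.val + 1 = u.2.val)) ∨
      (u.2.val = v.2.val ∧ (u.1.val + 1 = v.1.val ∨ v.1.val + 1 = u.1.val)) := by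
  unfold GridAdj
  rw [Int.abs_eq_natAbs, Int.abs_eq_natAbs]
  omega

lemma GridAdj.symm {u v : Fin m × Fin n} (h : GridAdj u v) : GridAdj v u := by
  rw [gridAdj_iff] at h ⊢
  omega

def natColoring (c : Fin m × Fin n → ZMod 3) (i j : ℕ) : ZMod 3 :=
  if h : i < m ∧ j < n then c (⟨i, h.1⟩, ⟨j, h.2⟩) else 0

lemma natColoring_apply (c : Fin m × Fin n → ZMod 3) (v : Fin m × Fin n) :
    natColoring c v.1 v.2 = c v :=
  dif_pos ⟨v.1.2, v.2.2⟩

def height (c : Fin m × Fin n → ZMod 3) (v : Fin m × Fin n) : ℤ :=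
  gridPotential (fun i j => (natColoring c i (j + 1) - natColoring c i j).valMinAbs)
    (fun i j => (natColoring c (i + 1) j - natColoring c i j).valMinAbs) v.1 v.2

lemma height_zero [NeZero m] [NeZero n] (c : Fin m × Fin n → ZMod 3) : height c (0, 0) = 0 := by
  simp [height, gridPotential_zero_zero]

lemma intCast_height [NeZero m] [NeZero n] (c : Fin m × Fin n → ZMod 3) (v : Fin m × Fin n) :
    (height c v : ZMod 3) = c v - c (0, 0) := by
  simp only [height, gridPotential, Int.cast_add, Int.cast_sum, ZMod.coe_valMinAbs]
  rw [sum_range_sub (fun a => natColoring c a 0), sum_range_sub (natColoring c v.1),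
    natColoring_apply, ← natColoring_apply c (0, 0)]
  simp only [Fin.val_zero]
  abel

lemma height_sub_height_of_succ_right (c : Fin m × Fin n → ZMod 3) {u v : Fin m × Fin n}
    (h₁ : u.1 = v.1) (h₂ : u.2.val + 1 = v.2.val) :
    height c v - height c u = (c v - c u).valMinAbs := by
  rw [← natColoring_apply c v, ← natColoring_apply c u, height, height, ← h₁, ← h₂,
    gridPotential_succ_right, add_sub_cancel_left]

lemma height_sub_height_of_succ_left {c : Fin m × Fin n → ZMod 3} (hc : IsProperColoring c)
    {u v : Fin m × Fin n} (h₁ : u.1.val + 1 = v.1.val) (h₂ : u.2 = v.2) :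
    height c v - height c u = (c v - c u).valMinAbs := by
  obtain ⟨⟨i, hi⟩, ⟨j, hj⟩⟩ := u
  rw [← natColoring_apply c v, ← natColoring_apply c, height, height, ← h₁, ← h₂,
    gridPotential_succ_left _ _ fun b hb => ?_, add_sub_cancel_left]
  have hi' : i + 1 < m := h₁ ▸ v.1.2
  let p : Fin m × Fin n := (⟨i, hi⟩, ⟨b, by omega⟩)
  let q : Fin m × Fin n := (⟨i + 1, hi'⟩, ⟨b, by omega⟩)
  let r : Fin m × Fin n := (⟨i, hi⟩, ⟨b + 1, by omega⟩)
  let s : Fin m × Fin n := (⟨i + 1, hi'⟩, ⟨b + 1, by omega⟩)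
  have hne : ∀ u v : Fin m × Fin n, GridAdj u v → natColoring c u.1 u.2 ≠ natColoring c v.1 v.2 :=
    fun u v huv => by simpa only [natColoring_apply] using hc u v huv
  exact valMinAbs_sub_add_valMinAbs_sub_comm (hne p q (by simp [p, q, gridAdj_iff]))
    (hne q s (by simp [q, s, gridAdj_iff])) (hne p r (by simp [p, r, gridAdj_iff]))
    (hne r s (by simp [r, s, gridAdj_iff]))

lemma height_sub_height_of_adj {c : Fin m × Fin n → ZMod 3} (hc : IsProperColoring c)
    {u v : Fin m × Fin n} (h : GridAdj u v) :
    height c v - height c u = (c v - c u).valMinAbs := by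
  have swap : height c u - height c v = (c u - c v).valMinAbs →
      height c v - height c u = (c v - c u).valMinAbs := fun h' => by
    rw [← neg_sub (c u), ZMod.valMinAbs_neg_of_ne_half (by omega), ← h', neg_sub]
  rcases (gridAdj_iff u v).1 h with ⟨h₁, h₂ | h₂⟩ | ⟨h₂, h₁ | h₁⟩
  · exact height_sub_height_of_succ_right c (Fin.ext h₁) h₂
  · exact swap (height_sub_height_of_succ_right c (Fin.ext h₁).symm h₂)
  · exact height_sub_height_of_succ_left hc h₁ (Fin.ext h₂)
  · exact swap (height_sub_height_of_succ_left hc h₁ (Fin.ext h₂).symm)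

end Height

section Cuts

variable {m n : ℕ}

lemma isProperColoring_add_indicator {c : Fin m × Fin n → ZMod 3} (hc : IsProperColoring c)
    {S : Set (Fin m × Fin n)} {d e : ZMod 3}
    (hd : ∀ u v, GridAdj u v → u ∈ S → v ∉ S → c u - c v = d) (hde : d + e ≠ 0) :
    IsProperColoring (c + S.indicator fun _ => e) := by
  intro u v huv
  by_cases hu : u ∈ S <;> by_cases hv : v ∈ S <;>
    simp only [Pi.add_apply, Set.indicator_of_mem, Set.indicator_of_notMem, hu, hv,
      not_false_eq_true, add_zero]
  · exact fun h => hc u v huv (add_right_cancel h)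
  · exact fun h => hde (by rw [← hd u v huv hu hv]; linear_combination h)
  · exact fun h => hde (by rw [← hd v u huv.symm hv hu]; linear_combination -h)
  · exact hc u v huv

lemma sub_eq_neg_one_of_height_sub_lt {c c' : Fin m × Fin n → ZMod 3}
    (hc : IsProperColoring c) (hc' : IsProperColoring c') {u v : Fin m × Fin n}
    (huv : GridAdj u v) (hlt : height c' v - height c v < height c' u - height c u) :
    c u - c v = -1 ∧ c' u - c' v = 1 := by
  have hstep := height_sub_height_of_adj hc huv.symm
  have hstep' := height_sub_height_of_adj hc' huv.symm
  have hsigns : (c u - c v).valMinAbs = -1 ∧ (c' u - c' v).valMinAbs = 1 := by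
    rcases valMinAbs_eq_one_or_eq_neg_one (sub_ne_zero.2 (hc u v huv)) with h | h <;>
    rcases valMinAbs_eq_one_or_eq_neg_one (sub_ne_zero.2 (hc' u v huv)) with h' | h' <;>
    omega
  constructor
  · simpa using congrArg (Int.cast : ℤ → ZMod 3) hsigns.1
  · simpa using congrArg (Int.cast : ℤ → ZMod 3) hsigns.2

variable [NeZero m] [NeZero n]

def IsUniformCut (c : Fin m × Fin n → ZMod 3) (S : Set (Fin m × Fin n)) : Prop :=
  S.Nonempty ∧ (0, 0) ∉ S ∧
    ∃ d : ZMod 3, ∀ u v : Fin m × Fin n, GridAdj u v → u ∈ S → v ∉ S → c u - c v = d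

def Crosses (F : Set (Sym2 (Fin m × Fin n))) (S : Set (Fin m × Fin n)) : Prop :=
  ∃ u v : Fin m × Fin n, GridAdj u v ∧ u ∈ S ∧ v ∉ S ∧ s(u, v) ∈ F

theorem IsForcing.crosses {c : Fin m × Fin n → ZMod 3} (hc : IsProperColoring c)
    {F : Set (Sym2 (Fin m × Fin n))} (hF : IsForcing c F) {S : Set (Fin m × Fin n)}
    (hS : IsUniformCut c S) : Crosses F S := by
  obtain ⟨⟨a, ha⟩, h₀, d, hd⟩ := hS
  by_contra hnot
  obtain ⟨e, he, hde⟩ : ∃ e : ZMod 3, e ≠ 0 ∧ d + e ≠ 0 :=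
    (by decide : ∀ d : ZMod 3, ∃ e : ZMod 3, e ≠ 0 ∧ d + e ≠ 0) d
  have hsame : ∀ u v, GridAdj u v → s(u, v) ∈ F → (u ∈ S ↔ v ∈ S) := fun u v huv huvF => by
    constructor
    · exact fun hu => by_contra fun hv => hnot ⟨u, v, huv, hu, hv, huvF⟩
    · exact fun hv => by_contra fun hu => hnot ⟨v, u, huv.symm, hv, hu, Sym2.eq_swap ▸ huvF⟩
  have hshift := hF _ (isProperColoring_add_indicator hc hd hde) (by simp [h₀])
    fun u v huv huvF => by
      by_cases hu : u ∈ S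
      · simp [hu, (hsame u v huv huvF).1 hu]
      · simp [hu, mt (hsame u v huv huvF).2 hu]
  exact he (by simpa [ha] using congrFun hshift a)

lemma exists_isUniformCut_of_height_lt {c c' : Fin m × Fin n → ZMod 3}
    (hc : IsProperColoring c) (hc' : IsProperColoring c') {w : Fin m × Fin n}
    (hw : height c w < height c' w) :
    ∃ S, IsUniformCut c S ∧ IsUniformCut c' S ∧
      ∀ u v, GridAdj u v → c' v - c' u = c v - c u → u ∈ S → v ∈ S := by
  set g : Fin m × Fin n → ℤ := fun v => height c' v - height c v with hg
  obtain ⟨p, -, hp⟩ := exists_max_image univ g ⟨w, mem_univ w⟩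
  have hpos : 0 < g p := (sub_pos.2 hw).trans_le (hp w (mem_univ w))
  have h₀ : ((0, 0) : Fin m × Fin n) ∉ {v | g v = g p} := fun h : g (0, 0) = g p =>
    hpos.ne' (h ▸ by simp [hg, height_zero])
  have hbdry : ∀ u v, GridAdj u v → u ∈ {v | g v = g p} → v ∉ {v | g v = g p} →
      c u - c v = -1 ∧ c' u - c' v = 1 := fun u v huv hu hv =>
    sub_eq_neg_one_of_height_sub_lt hc hc' huv
      ((lt_of_le_of_ne (hp v (mem_univ v)) hv).trans_eq hu.symm)
  refine ⟨{v | g v = g p}, ⟨⟨p, rfl⟩, h₀, -1, fun u v huv hu hv => (hbdry u v huv hu hv).1⟩,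
    ⟨⟨p, rfl⟩, h₀, 1, fun u v huv hu hv => (hbdry u v huv hu hv).2⟩, ?_⟩
  intro u v huv hdiff (hu : g u = g p)
  have hstep := height_sub_height_of_adj hc huv
  have hstep' := height_sub_height_of_adj hc' huv
  rw [hdiff] at hstep'
  show g v = g p
  rw [← hu, hg]
  linarith

theorem isForcing_of_forall_crosses {c : Fin m × Fin n → ZMod 3} (hc : IsProperColoring c)
    {F : Set (Sym2 (Fin m × Fin n))} (h : ∀ S, IsUniformCut c S → Crosses F S) :
    IsForcing c F := by
  intro c' hc' hbase hF
  by_contra hne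
  obtain ⟨w, hw⟩ := Function.ne_iff.1 hne
  have hheight : height c w ≠ height c' w := fun heq => hw <| by
    simpa [intCast_height, hbase] using (congrArg (Int.cast : ℤ → ZMod 3) heq).symm
  obtain ⟨S, hS, hkeep⟩ : ∃ S, IsUniformCut c S ∧
      ∀ u v, GridAdj u v → c' v - c' u = c v - c u → u ∈ S → v ∈ S := by
    rcases hheight.lt_or_gt with hlt | hlt
    · obtain ⟨S, hS, -, hkeep⟩ := exists_isUniformCut_of_height_lt hc hc' hlt
      exact ⟨S, hS, hkeep⟩
    · obtain ⟨S, -, hS, hkeep⟩ := exists_isUniformCut_of_height_lt hc' hc hlt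
      exact ⟨S, hS, fun u v huv hdiff => hkeep u v huv hdiff.symm⟩
  obtain ⟨u, v, huv, hu, hv, huvF⟩ := h S hS
  exact hv (hkeep u v huv (hF u v huv huvF) hu)

end Cuts

theorem forcing_iff_crosses_all_uniform_cuts_general {m n : ℕ} [NeZero m] [NeZero n]
    (c : Fin m × Fin n → ZMod 3) (hc : IsProperColoring c)
    (F : Set (Sym2 (Fin m × Fin n))) :
    IsForcing c F ↔
      ∀ S : Set (Fin m × Fin n), S.Nonempty → (0, 0) ∉ S →
        (∃ d : ZMod 3,
          ∀ u v : Fin m × Fin n, GridAdj u v → u ∈ S → v ∉ S → c u - c v = d) →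
        ∃ u v : Fin m × Fin n, GridAdj u v ∧ u ∈ S ∧ v ∉ S ∧ s(u, v) ∈ F :=
  ⟨fun hF S hne h₀ hd => hF.crosses hc ⟨hne, h₀, hd⟩,
    fun h => isForcing_of_forall_crosses hc fun S hS => h S hS.1 hS.2.1 hS.2.2⟩

/-- **Theorem 7 of the paper (main characterization).** A set `F` of grid edges is a
forcing set for the proper 3-coloring `c` if and only if `F` crosses every uniform
cut for `c`. -/
theorem forcing_iff_crosses_all_uniform_cuts {m n : ℕ} [NeZero m] [NeZero n]
    (c : Fin m × Fin n → ZMod 3) (hc : IsProperColoring c)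
    (F : Set (Sym2 (Fin m × Fin n))) (hFE : F ⊆ GridEdges m n) :
    IsForcing c F ↔
      ∀ S : Set (Fin m × Fin n), S.Nonempty → (0, 0) ∉ S →
        (∃ d : ZMod 3,
          ∀ u v : Fin m × Fin n, GridAdj u v → u ∈ S → v ∉ S → c u - c v = d) →
        ∃ u v : Fin m × Fin n, GridAdj u v ∧ u ∈ S ∧ v ∉ S ∧ s(u, v) ∈ F :=
  forcing_iff_crosses_all_uniform_cuts_general c hc F
end

section
/- Let m, n be positive integers with mn ≥ 2, and let c be the checkerboard coloring of the m×n grid graph. Then every forcing set for c has cardinality at least ⌈mn/2⌉. -/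
lemma gridAdj_ne {m n : ℕ} {u v : Fin m × Fin n} (h : GridAdj u v) : u ≠ v := by
  rintro rfl
  simp [GridAdj] at h

lemma checkerboard_parity {m n : ℕ} {u v : Fin m × Fin n} (h : GridAdj u v) :
    (u.1.val + u.2.val) % 2 ≠ (v.1.val + v.2.val) % 2 := by
  unfold GridAdj at h
  rcases abs_cases ((u.1.val : ℤ) - v.1.val) with ⟨e1, _⟩ | ⟨e1, _⟩ <;>
  rcases abs_cases ((u.2.val : ℤ) - v.2.val) with ⟨e2, _⟩ | ⟨e2, _⟩ <;>
    rw [e1, e2] at h <;> omega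

lemma checkerboard_adj {m n : ℕ} {u v : Fin m × Fin n} (h : GridAdj u v) :
    checkerboard u ≠ checkerboard v := by
  have h1 := checkerboard_parity h
  unfold checkerboard
  rcases Nat.mod_two_eq_zero_or_one (u.1.val + u.2.val) with h2 | h2 <;>
  rcases Nat.mod_two_eq_zero_or_one (v.1.val + v.2.val) with h3 | h3 <;>
    first
      | (exact absurd (h2.trans h3.symm) h1)
      | (simp [h2, h3] <;> decide)

lemma checkerboard_01 {m n : ℕ} (v : Fin m × Fin n) :
    checkerboard v = 0 ∨ checkerboard v = 1 := by
  unfold checkerboard; split <;> simp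

lemma checkerboard_base {m n : ℕ} [NeZero m] [NeZero n] :
    checkerboard ((0, 0) : Fin m × Fin n) = 0 := by
  simp [checkerboard]

lemma forcing_covers {m n : ℕ} [NeZero m] [NeZero n] (hmn : 2 ≤ m * n)
    (F : Finset (Sym2 (Fin m × Fin n)))
    (hF : IsForcing checkerboard (↑F : Set (Sym2 (Fin m × Fin n))))
    (v : Fin m × Fin n) : ∃ e ∈ F, v ∈ e := by
  by_contra hc
  push_neg at hc
  by_cases hv : v = (0, 0)
  · -- the base vertex is uncovered: shift every other vertex by +1
    subst hv
    set c' : Fin m × Fin n → ZMod 3 :=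
      fun w => if w = (0, 0) then 0 else checkerboard w + 1 with hc'
    have hone : ∀ w : Fin m × Fin n, GridAdj (0, 0) w → checkerboard w = 1 := by
      intro w hw
      have h := checkerboard_adj hw
      rw [checkerboard_base] at h
      rcases checkerboard_01 w with h0 | h0
      · exact absurd h0.symm h
      · exact h0
    have hone' : ∀ w : Fin m × Fin n, GridAdj w (0, 0) → checkerboard w = 1 := by
      intro w hw
      have h := checkerboard_adj hw
      rw [checkerboard_base] at h
      rcases checkerboard_01 w with h0 | h0
      · exact absurd h0 h
      · exact h0
    have hprop : IsProperColoring c' := by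
      intro u w huw
      have hne := gridAdj_ne huw
      by_cases hu : u = (0, 0) <;> by_cases hw : w = (0, 0)
      · exact absurd (hu.trans hw.symm) hne
      · subst hu
        simp only [hc', if_pos rfl, if_neg hw, hone w huw]
        decide
      · subst hw
        simp only [hc', if_pos rfl, if_neg hu, hone' u huw]
        decide
      · simp only [hc', if_neg hu, if_neg hw]
        intro h
        exact checkerboard_adj huw (add_right_cancel h)
    have hbase : c' (0, 0) = checkerboard ((0, 0) : Fin m × Fin n) := by
      simp only [hc', if_pos rfl]
      exact checkerboard_base.symm
    have hdiff : ∀ u w : Fin m × Fin n, GridAdj u w → s(u, w) ∈ (↑F : Set _) →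
        c' w - c' u = checkerboard w - checkerboard u := by
      intro u w huw hmem
      have hu : u ≠ (0, 0) := fun h => hc _ hmem (h ▸ Sym2.mem_mk_left u w)
      have hw : w ≠ (0, 0) := fun h => hc _ hmem (h ▸ Sym2.mem_mk_right u w)
      simp only [hc', if_neg hu, if_neg hw]
      ring
    have heq := hF c' hprop hbase hdiff
    -- find a vertex different from (0,0)
    have hex : ∃ w : Fin m × Fin n, w ≠ (0, 0) := by
      by_cases hm : 2 ≤ m
      · exact ⟨((⟨1, by omega⟩ : Fin m), (0 : Fin n)), by simp [Prod.ext_iff, Fin.ext_iff]⟩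
      · have hn : 2 ≤ n := by
          have hm1 : m = 1 := by
            have := Nat.pos_of_ne_zero (NeZero.ne m); omega
          nlinarith [Nat.pos_of_ne_zero (NeZero.ne n)]
        exact ⟨((0 : Fin m), (⟨1, by omega⟩ : Fin n)), by simp [Prod.ext_iff, Fin.ext_iff]⟩
    obtain ⟨w, hw⟩ := hex
    have := congrFun heq w
    simp only [hc', if_neg hw] at this
    have : (1 : ZMod 3) = 0 := by
      have h2 : checkerboard w + 1 = checkerboard w + 0 := by rw [add_zero]; exact this
      exact add_left_cancel h2
    exact one_ne_zero this
  · -- v ≠ (0,0) uncovered: flip v to color 2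
    set c' : Fin m × Fin n → ZMod 3 := Function.update checkerboard v 2 with hc'
    have hne2 : ∀ w : Fin m × Fin n, checkerboard w ≠ 2 := by
      intro w
      rcases checkerboard_01 w with h | h <;> rw [h] <;> decide
    have hprop : IsProperColoring c' := by
      intro u w huw
      have hne := gridAdj_ne huw
      by_cases hu : u = v <;> by_cases hw : w = v
      · exact absurd (hu.trans hw.symm) hne
      · subst hu
        rw [hc', Function.update_self, Function.update_of_ne hw]
        exact fun h => hne2 w h.symm
      · subst hw
        rw [hc', Function.update_of_ne hu, Function.update_self]
        exact hne2 u
      · rw [hc', Function.update_of_ne hu, Function.update_of_ne hw]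
        exact checkerboard_adj huw
    have hbase : c' (0, 0) = checkerboard ((0, 0) : Fin m × Fin n) := by
      rw [hc', Function.update_of_ne (Ne.symm hv)]
    have hdiff : ∀ u w : Fin m × Fin n, GridAdj u w → s(u, w) ∈ (↑F : Set _) →
        c' w - c' u = checkerboard w - checkerboard u := by
      intro u w huw hmem
      have hu : u ≠ v := fun h => hc _ hmem (h ▸ Sym2.mem_mk_left u w)
      have hw : w ≠ v := fun h => hc _ hmem (h ▸ Sym2.mem_mk_right u w)
      rw [hc', Function.update_of_ne hu, Function.update_of_ne hw]
    have heq := hF c' hprop hbase hdiff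
    have := congrFun heq v
    rw [hc', Function.update_self] at this
    exact hne2 v this.symm

/-- **Lower bound for the standard Miura-ori.** Every forcing set for the
checkerboard coloring of the `m × n` grid (with `mn ≥ 2`) has cardinality at least
`⌈mn/2⌉`. -/
theorem checkerboard_forcing_lower_bound {m n : ℕ} [NeZero m] [NeZero n]
    (hmn : 2 ≤ m * n)
    (F : Finset (Sym2 (Fin m × Fin n))) (hFE : ↑F ⊆ GridEdges m n)
    (hF : IsForcing checkerboard (↑F : Set (Sym2 (Fin m × Fin n)))) :
    (m * n + 1) / 2 ≤ F.card := by
  classical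
  have hcov := forcing_covers hmn F hF
  choose f hfF hfmem using hcov
  have hcard : (Finset.univ : Finset (Fin m × Fin n)).card ≤ 2 * F.card := by
    apply Finset.card_le_mul_card_image_of_maps_to (fun a _ => hfF a)
    intro e heF
    obtain ⟨u, w, huw, rfl⟩ := hFE heF
    have : {a ∈ (Finset.univ : Finset (Fin m × Fin n)) | f a = s(u, w)} ⊆ {u, w} := by
      intro x hx
      simp only [Finset.mem_filter] at hx
      have := hfmem x
      rw [hx.2] at this
      rcases Sym2.mem_iff.mp this with h | h <;> simp [h]
    calc _ ≤ ({u, w} : Finset (Fin m × Fin n)).card := Finset.card_le_card this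
      _ ≤ 2 := Finset.card_insert_le _ _ |>.trans (by simp)
  rw [Finset.card_univ, Fintype.card_prod, Fintype.card_fin, Fintype.card_fin] at hcard
  omega
end
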